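/- Let α₁, α₂ ∈ (0,2), let Λ be a probability measure on Δ₁, set p := 1/α₁ + 1/α₂, and fix constants 0 < c₁ ≤ c₂. There exists a constant C such that for all positive integers n₁, n₂ with c₁ n₂^{α₂} ≤ n₁^{α₁} ≤ c₂ n₂^{α₂}, and all θ = (θ₁,θ₂) with 0 < |θ_k| ≤ n_k π for k = 1,2, one has (with n* := n₁^{α₁}): ∫_0^∞ ∫_{Δ₁} h_n(r, w, θ) Λ(dw) r^{−2} dr ≤ C·( n₁n₂·|θ₁θ₂|^{1/p − 1} + n₁·|θ₁|^{α₁−1} + n₂·|θ₂|^{α₂−1} + n₁^{α₁} ). -/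

import Mathlib

open MeasureTheory
open scoped ENNReal

/-- The open simplex `Δ₁ = {w ∈ (0,1)² : w₁ + w₂ = 1}`. -/
def Delta1 : Set (ℝ × ℝ) :=
  {w | w.1 ∈ Set.Ioo (0:ℝ) 1 ∧ w.2 ∈ Set.Ioo (0:ℝ) 1 ∧ w.1 + w.2 = 1}

/-- `g(u,φ) = u(2-u)/(u² + 2(1-u)(1-cos φ))`. -/
noncomputable def gfun (u φ : ℝ) : ℝ :=
  u * (2 - u) / (u ^ 2 + 2 * (1 - u) * (1 - Real.cos φ))

/-- `h_n(r,w,θ)` with rescaling factor `nstar`. -/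
noncomputable def hfun (α₁ α₂ nstar : ℝ) (n₁ n₂ : ℕ) (θ : ℝ × ℝ) (r : ℝ) (w : ℝ × ℝ) : ℝ :=
  if 1 ≤ nstar * r * w.1 ∧ 1 ≤ nstar * r * w.2 then
    gfun ((nstar * r * w.1) ^ (-1/α₁)) (θ.1 / n₁) *
      gfun ((nstar * r * w.2) ^ (-1/α₂)) (θ.2 / n₂)
  else 0

/-- `∫_0^∞ ∫_{Δ₁} h_n(r,w,θ) Λ(dw) r^{-2} dr`. -/
noncomputable def Ih (α₁ α₂ : ℝ) (Λ : Measure (ℝ × ℝ)) (nstar : ℝ) (n₁ n₂ : ℕ)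
    (θ : ℝ × ℝ) : ℝ≥0∞ :=
  ∫⁻ r in Set.Ioi (0:ℝ),
    (∫⁻ w in Delta1, ENNReal.ofReal (hfun α₁ α₂ nstar n₁ n₂ θ r w) ∂Λ)
    * ENNReal.ofReal (r ^ (-2 : ℝ))

lemma one_sub_cos_ge {φ : ℝ} (h : |φ| ≤ Real.pi) :
    2 * φ ^ 2 / Real.pi ^ 2 ≤ 1 - Real.cos φ := by
  have hπ := Real.pi_pos
  have hs : |φ| / Real.pi ≤ Real.sin (|φ| / 2) := by
    have h2 := Real.mul_le_sin (x := |φ| / 2) (by positivity) (by linarith)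
    calc |φ| / Real.pi = 2 / Real.pi * (|φ| / 2) := by field_simp
    _ ≤ Real.sin (|φ| / 2) := h2
  have hsin_eq : Real.sin (φ / 2) ^ 2 = Real.sin (|φ| / 2) ^ 2 := by
    rcases abs_cases φ with ⟨h1, _⟩ | ⟨h1, _⟩
    · rw [h1]
    · rw [h1, neg_div, Real.sin_neg]; ring
  have hcos : 1 - Real.cos φ = 2 * Real.sin (φ / 2) ^ 2 := by
    have h1 : Real.cos φ = 2 * Real.cos (φ / 2) ^ 2 - 1 := by
      have := Real.cos_two_mul (φ / 2)
      rwa [show 2 * (φ / 2) = φ by ring] at this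
    have h2 := Real.sin_sq_add_cos_sq (φ / 2)
    linarith
  have hsq : (|φ| / Real.pi) ^ 2 ≤ Real.sin (|φ| / 2) ^ 2 :=
    pow_le_pow_left₀ (by positivity) hs 2
  have heq : (|φ| / Real.pi) ^ 2 = φ ^ 2 / Real.pi ^ 2 := by
    rw [div_pow, sq_abs]
  rw [heq] at hsq
  rw [hcos, hsin_eq, show 2 * φ ^ 2 / Real.pi ^ 2 = 2 * (φ ^ 2 / Real.pi ^ 2) by ring]
  linarith

lemma g_nonneg {u : ℝ} (hu : 0 < u) (hu1 : u ≤ 1) (φ : ℝ) : 0 ≤ gfun u φ := by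
  have hc := Real.cos_le_one φ
  apply div_nonneg
  · nlinarith
  · nlinarith

lemma g_le_inv {u : ℝ} (hu : 0 < u) (hu1 : u ≤ 1) (φ : ℝ) : gfun u φ ≤ 2 / u := by
  have hc := Real.cos_le_one φ
  unfold gfun
  have h1 : u * (2 - u) ≤ 2 * u := by nlinarith
  have h2 : (0:ℝ) < u ^ 2 := by positivity
  calc u * (2 - u) / (u ^ 2 + 2 * (1 - u) * (1 - Real.cos φ)) ≤ 2 * u / u ^ 2 :=
        div_le_div₀ (by positivity) h1 h2 (by nlinarith)
  _ = 2 / u := by field_simp [hu.ne']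

lemma g_le_phi {u φ : ℝ} (hu : 0 < u) (hu1 : u ≤ 1) (hφ : 0 < |φ|)
    (hφπ : |φ| ≤ Real.pi) : gfun u φ ≤ 4 * Real.pi / |φ| := by
  have hπ := Real.pi_pos
  have hπ315 := Real.pi_lt_d2
  rcases le_or_gt (1/2 : ℝ) u with hcase | hcase
  · calc gfun u φ ≤ 2 / u := g_le_inv hu hu1 φ
    _ ≤ 4 := by rw [div_le_iff₀ hu]; linarith
    _ ≤ 4 * Real.pi / |φ| := by
        rw [le_div_iff₀ hφ]; nlinarith
  · have hcosb := one_sub_cos_ge hφπ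
    have hc := Real.cos_le_one φ
    have hπ2 : (2:ℝ) < Real.pi ^ 2 := by nlinarith [Real.pi_gt_three]
    have hcosb' : 2 * φ ^ 2 ≤ (1 - Real.cos φ) * Real.pi ^ 2 := by
      rw [div_le_iff₀ (by positivity)] at hcosb; linarith
    have hsq : 2 * u * |φ| ≤ u ^ 2 + φ ^ 2 := by nlinarith [sq_nonneg (u - |φ|), sq_abs φ]
    have hden : 4 * u * |φ| / Real.pi ^ 2 ≤ u ^ 2 + 2 * (1 - u) * (1 - Real.cos φ) := by
      rw [div_le_iff₀ (by positivity)]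
      nlinarith [mul_nonneg (show (0:ℝ) ≤ 1 - 2*u by linarith)
          (mul_nonneg (show (0:ℝ) ≤ 1 - Real.cos φ by linarith) (sq_nonneg Real.pi)),
        mul_nonneg (show (0:ℝ) ≤ Real.pi ^ 2 - 2 by linarith) (sq_nonneg u)]
    have hdenpos : (0:ℝ) < 4 * u * |φ| / Real.pi ^ 2 := by positivity
    calc gfun u φ ≤ 2 * u / (4 * u * |φ| / Real.pi ^ 2) := by
          unfold gfun
          exact div_le_div₀ (by positivity) (by nlinarith) hdenpos hden
    _ = Real.pi ^ 2 / (2 * |φ|) := by field_simp; ring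
    _ ≤ 4 * Real.pi / |φ| := by
        rw [div_le_div_iff₀ (by positivity) hφ]
        nlinarith [mul_nonneg (show (0:ℝ) ≤ 8 * Real.pi - Real.pi ^ 2 by nlinarith) hφ.le]

lemma lint_Ioc_rpow {c t : ℝ} (hc : 0 ≤ c) (ht : -1 < t) :
    ∫⁻ r in Set.Ioc (0:ℝ) c, ENNReal.ofReal (r ^ t) =
      ENNReal.ofReal (c ^ (t + 1) / (t + 1)) := by
  have hint : IntegrableOn (fun r : ℝ => r ^ t) (Set.Ioc 0 c) :=
    (intervalIntegrable_iff_integrableOn_Ioc_of_le hc).mp (intervalIntegral.intervalIntegrable_rpow' ht)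
  rw [← MeasureTheory.ofReal_integral_eq_lintegral_ofReal hint ?nn]
  case nn =>
    filter_upwards [ae_restrict_mem measurableSet_Ioc] with x hx
    exact Real.rpow_nonneg hx.1.le t
  congr 1
  rw [← intervalIntegral.integral_of_le hc, integral_rpow (Or.inl ht)]
  rw [Real.zero_rpow (by linarith : t + 1 ≠ 0)]
  ring

lemma lint_Ioi_inv_sq {c : ℝ} (hc : 0 < c) :
    ∫⁻ r in Set.Ioi c, ENNReal.ofReal (r ^ (-2 : ℝ)) = ENNReal.ofReal c⁻¹ := by
  have hint : IntegrableOn (fun r : ℝ => r ^ (-2:ℝ)) (Set.Ioi c) :=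
    integrableOn_Ioi_rpow_of_lt (by norm_num) hc
  rw [← MeasureTheory.ofReal_integral_eq_lintegral_ofReal hint ?nn]
  case nn =>
    filter_upwards [ae_restrict_mem measurableSet_Ioi] with x hx
    exact Real.rpow_nonneg (hc.le.trans hx.out.le) _
  congr 1
  rw [integral_Ioi_rpow_of_lt (by norm_num) hc]
  norm_num
  rw [Real.rpow_neg_one]

/-- with `p := 1/α₁ + 1/α₂`, `c₁ n₂^{α₂} ≤ n₁^{α₁} ≤ c₂ n₂^{α₂}` and
`0 < |θ_k| ≤ n_k π`, one has, with `n* = n₁^{α₁}`: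
`∫_0^∞ ∫_{Δ₁} h_n Λ(dw) r^{-2} dr
  ≤ C (n₁n₂ |θ₁θ₂|^{1/p-1} + n₁|θ₁|^{α₁-1} + n₂|θ₂|^{α₂-1} + n₁^{α₁})`. -/
theorem stmt_11 (α₁ α₂ : ℝ) (hα₁ : α₁ ∈ Set.Ioo (0:ℝ) 2) (hα₂ : α₂ ∈ Set.Ioo (0:ℝ) 2)
    (Λ : Measure (ℝ × ℝ)) [IsProbabilityMeasure Λ] (hΛ : Λ Delta1ᶜ = 0)
    (c₁ c₂ : ℝ) (hc₁ : 0 < c₁) (hc₁₂ : c₁ ≤ c₂) :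
    ∃ C : ℝ, 0 < C ∧
      ∀ n₁ n₂ : ℕ, 0 < n₁ → 0 < n₂ →
        c₁ * (n₂ : ℝ) ^ α₂ ≤ (n₁ : ℝ) ^ α₁ → (n₁ : ℝ) ^ α₁ ≤ c₂ * (n₂ : ℝ) ^ α₂ →
        ∀ θ₁ θ₂ : ℝ, 0 < |θ₁| → |θ₁| ≤ (n₁ : ℝ) * Real.pi →
          0 < |θ₂| → |θ₂| ≤ (n₂ : ℝ) * Real.pi →
          Ih α₁ α₂ Λ ((n₁ : ℝ) ^ α₁) n₁ n₂ (θ₁, θ₂)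
            ≤ ENNReal.ofReal (C *
                ((n₁ : ℝ) * (n₂ : ℝ) * |θ₁ * θ₂| ^ (1 / (1/α₁ + 1/α₂) - 1)
                  + (n₁ : ℝ) * |θ₁| ^ (α₁ - 1)
                  + (n₂ : ℝ) * |θ₂| ^ (α₂ - 1)
                  + (n₁ : ℝ) ^ α₁)) := by
  obtain ⟨hα₁0, hα₁2⟩ := hα₁
  obtain ⟨hα₂0, hα₂2⟩ := hα₂
  have hπ := Real.pi_pos
  have hc₂ : 0 < c₂ := lt_of_lt_of_le hc₁ hc₁₂
  set p : ℝ := 1/α₁ + 1/α₂ with hp_def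
  have hp1 : 1 < p := by
    have h1 : (1:ℝ)/2 < 1/α₁ := by
      rw [div_lt_div_iff₀ (by norm_num) hα₁0]; linarith
    have h2 : (1:ℝ)/2 < 1/α₂ := by
      rw [div_lt_div_iff₀ (by norm_num) hα₂0]; linarith
    rw [hp_def]; linarith
  have hp0 : 0 < p := by linarith
  have hpm1 : 0 < p - 1 := by linarith
  set e : ℝ := 1 - 1/p with he_def
  have he0 : 0 < e := by
    have : 1/p < 1 := by rw [div_lt_one hp0]; linarith
    rw [he_def]; linarith
  refine ⟨(4/(p-1) + 4) * (16*Real.pi^2)^e * c₂^(1/(p*α₂)), ?_, ?_⟩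
  · have h1 : (0:ℝ) < 4/(p-1) + 4 := by positivity
    have h2 : (0:ℝ) < (16*Real.pi^2)^e := Real.rpow_pos_of_pos (by positivity) _
    have h3 : (0:ℝ) < c₂^(1/(p*α₂)) := Real.rpow_pos_of_pos hc₂ _
    positivity
  intro n₁ n₂ hn₁ hn₂ hlow hupp θ₁ θ₂ hθ₁ hθ₁π hθ₂ hθ₂π
  have hn₁R : (0:ℝ) < n₁ := Nat.cast_pos.mpr hn₁
  have hn₂R : (0:ℝ) < n₂ := Nat.cast_pos.mpr hn₂
  set N : ℝ := (n₁:ℝ)^α₁ with hN_def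
  have hN : 0 < N := Real.rpow_pos_of_pos hn₁R _
  set a₁ : ℝ := |θ₁| / n₁ with ha₁_def
  set a₂ : ℝ := |θ₂| / n₂ with ha₂_def
  have ha₁ : 0 < a₁ := div_pos hθ₁ hn₁R
  have ha₂ : 0 < a₂ := div_pos hθ₂ hn₂R
  have ha₁π : a₁ ≤ Real.pi := by
    rw [ha₁_def, div_le_iff₀ hn₁R]; linarith
  have ha₂π : a₂ ≤ Real.pi := by
    rw [ha₂_def, div_le_iff₀ hn₂R]; linarith
  set M : ℝ := 16 * Real.pi^2 / (a₁ * a₂) with hM_def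
  have hM : 0 < M := by positivity
  set c : ℝ := M^(1/p) / N with hc_def
  have hcpos : 0 < c := by
    rw [hc_def]; exact div_pos (Real.rpow_pos_of_pos hM _) hN
  clear_value p e N a₁ a₂ M c
  -- pointwise bound
  have key_pt : ∀ r : ℝ, 0 < r → ∀ w : ℝ × ℝ, w ∈ Delta1 →
      hfun α₁ α₂ N n₁ n₂ (θ₁, θ₂) r w ≤ 4 * min ((N*r)^p) M := by
    intro r hr w hw
    obtain ⟨hw1, hw2, hwsum⟩ := hw
    have hminn : (0:ℝ) ≤ min ((N*r)^p) M :=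
      le_min (Real.rpow_nonneg (mul_nonneg hN.le hr.le) _) hM.le
    simp only [hfun]
    split_ifs with hind
    swap
    · linarith
    obtain ⟨h1, h2⟩ := hind
    have hφ₁abs : |θ₁ / (n₁:ℝ)| = a₁ := by
      rw [abs_div, Nat.abs_cast, ha₁_def]
    have hφ₂abs : |θ₂ / (n₂:ℝ)| = a₂ := by
      rw [abs_div, Nat.abs_cast, ha₂_def]
    have hx₁0 : (0:ℝ) < N * r * w.1 := lt_of_lt_of_le one_pos h1
    have hx₂0 : (0:ℝ) < N * r * w.2 := lt_of_lt_of_le one_pos h2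
    have hu₁0 : 0 < (N * r * w.1) ^ (-1/α₁) := Real.rpow_pos_of_pos hx₁0 _
    have hu₂0 : 0 < (N * r * w.2) ^ (-1/α₂) := Real.rpow_pos_of_pos hx₂0 _
    have hu₁1 : (N * r * w.1) ^ (-1/α₁) ≤ 1 :=
      Real.rpow_le_one_of_one_le_of_nonpos h1
        (by rw [neg_div]; exact neg_nonpos.mpr (by positivity))
    have hu₂1 : (N * r * w.2) ^ (-1/α₂) ≤ 1 :=
      Real.rpow_le_one_of_one_le_of_nonpos h2
        (by rw [neg_div]; exact neg_nonpos.mpr (by positivity))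
    have hgn₁ : 0 ≤ gfun ((N * r * w.1) ^ (-1/α₁)) (θ₁ / n₁) := g_nonneg hu₁0 hu₁1 _
    have hgn₂ : 0 ≤ gfun ((N * r * w.2) ^ (-1/α₂)) (θ₂ / n₂) := g_nonneg hu₂0 hu₂1 _
    rcases le_total ((N*r)^p) M with hmin | hmin
    · rw [min_eq_left hmin]
      have hb : gfun ((N * r * w.1) ^ (-1/α₁)) (θ₁ / n₁) *
          gfun ((N * r * w.2) ^ (-1/α₂)) (θ₂ / n₂) ≤
          (2 / (N * r * w.1) ^ (-1/α₁)) * (2 / (N * r * w.2) ^ (-1/α₂)) :=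
        mul_le_mul (g_le_inv hu₁0 hu₁1 _) (g_le_inv hu₂0 hu₂1 _) hgn₂ (le_of_lt (div_pos two_pos hu₁0))
      have hinv₁ : 2 / (N * r * w.1) ^ (-1/α₁) = 2 * (N * r * w.1) ^ (1/α₁) := by
        rw [neg_div, Real.rpow_neg hx₁0.le, div_eq_mul_inv, inv_inv]
      have hinv₂ : 2 / (N * r * w.2) ^ (-1/α₂) = 2 * (N * r * w.2) ^ (1/α₂) := by
        rw [neg_div, Real.rpow_neg hx₂0.le, div_eq_mul_inv, inv_inv]
      have hle₁ : (N * r * w.1) ^ (1/α₁) ≤ (N*r) ^ (1/α₁) := by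
        apply Real.rpow_le_rpow hx₁0.le _ (by positivity)
        exact (mul_le_mul_of_nonneg_left hw1.2.le (mul_pos hN hr).le).trans_eq (mul_one _)
      have hle₂ : (N * r * w.2) ^ (1/α₂) ≤ (N*r) ^ (1/α₂) := by
        apply Real.rpow_le_rpow hx₂0.le _ (by positivity)
        exact (mul_le_mul_of_nonneg_left hw2.2.le (mul_pos hN hr).le).trans_eq (mul_one _)
      have hNr : (N*r)^p = (N*r)^(1/α₁) * (N*r)^(1/α₂) := by
        rw [hp_def, Real.rpow_add (mul_pos hN hr)]
      calc gfun ((N * r * w.1) ^ (-1/α₁)) (θ₁ / n₁) *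
            gfun ((N * r * w.2) ^ (-1/α₂)) (θ₂ / n₂)
          ≤ (2 * (N * r * w.1) ^ (1/α₁)) * (2 * (N * r * w.2) ^ (1/α₂)) := by
            rw [← hinv₁, ← hinv₂]; exact hb
        _ ≤ (2 * (N*r) ^ (1/α₁)) * (2 * (N*r) ^ (1/α₂)) := by
            apply mul_le_mul (by linarith) (by linarith)
              (mul_nonneg (by norm_num) (Real.rpow_nonneg hx₂0.le _))
              (mul_nonneg (by norm_num) (Real.rpow_nonneg (mul_pos hN hr).le _))
        _ = 4 * (N*r)^p := by rw [hNr]; ring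
    · rw [min_eq_right hmin]
      have hg₁ : gfun ((N * r * w.1) ^ (-1/α₁)) (θ₁ / n₁) ≤ 4 * Real.pi / a₁ := by
        have := g_le_phi hu₁0 hu₁1 (φ := θ₁ / n₁)
          (by rw [hφ₁abs]; exact ha₁) (by rw [hφ₁abs]; exact ha₁π)
        rwa [hφ₁abs] at this
      have hg₂ : gfun ((N * r * w.2) ^ (-1/α₂)) (θ₂ / n₂) ≤ 4 * Real.pi / a₂ := by
        have := g_le_phi hu₂0 hu₂1 (φ := θ₂ / n₂)
          (by rw [hφ₂abs]; exact ha₂) (by rw [hφ₂abs]; exact ha₂π)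
        rwa [hφ₂abs] at this
      have hb : gfun ((N * r * w.1) ^ (-1/α₁)) (θ₁ / n₁) *
          gfun ((N * r * w.2) ^ (-1/α₂)) (θ₂ / n₂) ≤
          (4 * Real.pi / a₁) * (4 * Real.pi / a₂) :=
        mul_le_mul hg₁ hg₂ hgn₂ (le_of_lt (div_pos (by positivity) ha₁))
      have hMeq : (4 * Real.pi / a₁) * (4 * Real.pi / a₂) = M := by
        rw [hM_def]; field_simp; ring
      rw [hMeq] at hb
      linarith
  -- inner integral bound
  have key_inner : ∀ r : ℝ, r ∈ Set.Ioi (0:ℝ) →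
      (∫⁻ w in Delta1, ENNReal.ofReal (hfun α₁ α₂ N n₁ n₂ (θ₁,θ₂) r w) ∂Λ)
        ≤ ENNReal.ofReal (4 * min ((N*r)^p) M) := by
    intro r hr
    calc (∫⁻ w in Delta1, ENNReal.ofReal (hfun α₁ α₂ N n₁ n₂ (θ₁,θ₂) r w) ∂Λ)
        ≤ ∫⁻ _ in Delta1, ENNReal.ofReal (4 * min ((N*r)^p) M) ∂Λ :=
          setLIntegral_mono measurable_const fun w hw =>
            ENNReal.ofReal_le_ofReal (key_pt r hr w hw)
      _ = ENNReal.ofReal (4 * min ((N*r)^p) M) * Λ Delta1 := setLIntegral_const _ _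
      _ ≤ ENNReal.ofReal (4 * min ((N*r)^p) M) * 1 := mul_le_mul_right prob_le_one _
      _ = ENNReal.ofReal (4 * min ((N*r)^p) M) := mul_one _
  -- outer bound
  have houter : Ih α₁ α₂ Λ N n₁ n₂ (θ₁, θ₂) ≤
      ∫⁻ r in Set.Ioi (0:ℝ), ENNReal.ofReal (4 * min ((N*r)^p) M * r^(-2:ℝ)) := by
    simp only [Ih]
    apply setLIntegral_mono (by fun_prop)
    intro r hr
    have hr0 : (0:ℝ) < r := hr
    have hnn : (0:ℝ) ≤ 4 * min ((N*r)^p) M :=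
      mul_nonneg (by norm_num) (le_min (Real.rpow_nonneg (mul_nonneg hN.le (le_of_lt hr0)) _) hM.le)
    rw [ENNReal.ofReal_mul hnn]
    exact mul_le_mul_left (key_inner r hr) _
  -- split
  have hsplit : (∫⁻ r in Set.Ioi (0:ℝ), ENNReal.ofReal (4 * min ((N*r)^p) M * r^(-2:ℝ)))
      ≤ (∫⁻ r in Set.Ioc (0:ℝ) c, ENNReal.ofReal (4 * min ((N*r)^p) M * r^(-2:ℝ)))
        + ∫⁻ r in Set.Ioi c, ENNReal.ofReal (4 * min ((N*r)^p) M * r^(-2:ℝ)) := by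
    rw [← Set.Ioc_union_Ioi_eq_Ioi hcpos.le]
    exact lintegral_union_le _ _ _
  -- piece 1
  have hpiece1 : (∫⁻ r in Set.Ioc (0:ℝ) c, ENNReal.ofReal (4 * min ((N*r)^p) M * r^(-2:ℝ)))
      ≤ ENNReal.ofReal ((4 * N^p) * (c^(p-1)/(p-1))) := by
    calc (∫⁻ r in Set.Ioc (0:ℝ) c, ENNReal.ofReal (4 * min ((N*r)^p) M * r^(-2:ℝ)))
        ≤ ∫⁻ r in Set.Ioc (0:ℝ) c, ENNReal.ofReal (4*N^p) * ENNReal.ofReal (r^(p-2)) := by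
          apply setLIntegral_mono (by fun_prop)
          intro r hr
          have hr0 : (0:ℝ) < r := hr.1
          rw [← ENNReal.ofReal_mul (mul_nonneg (by norm_num) (Real.rpow_nonneg hN.le _))]
          apply ENNReal.ofReal_le_ofReal
          have hmin : min ((N*r)^p) M ≤ (N*r)^p := min_le_left _ _
          have hNrp : (N*r)^p = N^p * r^p := Real.mul_rpow hN.le hr0.le
          have hrneg : (0:ℝ) ≤ r^(-2:ℝ) := Real.rpow_nonneg hr0.le _
          have hrp : r^p * r^(-2:ℝ) = r^(p-2) := by
            rw [← Real.rpow_add hr0]; ring_nf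
          calc 4 * min ((N*r)^p) M * r^(-2:ℝ) ≤ 4 * (N^p * r^p) * r^(-2:ℝ) := by
                apply mul_le_mul_of_nonneg_right _ hrneg
                rw [← hNrp]; linarith
            _ = 4*N^p * (r^p * r^(-2:ℝ)) := by ring
            _ = 4*N^p * r^(p-2) := by rw [hrp]
      _ = ENNReal.ofReal (4*N^p) * ∫⁻ r in Set.Ioc (0:ℝ) c, ENNReal.ofReal (r^(p-2)) :=
          lintegral_const_mul' _ _ ENNReal.ofReal_ne_top
      _ = ENNReal.ofReal (4*N^p) * ENNReal.ofReal (c^(p-2+1)/(p-2+1)) := by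
          rw [lint_Ioc_rpow hcpos.le (by linarith)]
      _ = ENNReal.ofReal ((4 * N^p) * (c^(p-1)/(p-1))) := by
          rw [← ENNReal.ofReal_mul (mul_nonneg (by norm_num) (Real.rpow_nonneg hN.le _)),
            show p-2+1 = p-1 by ring]
  -- piece 2
  have hpiece2 : (∫⁻ r in Set.Ioi c, ENNReal.ofReal (4 * min ((N*r)^p) M * r^(-2:ℝ)))
      ≤ ENNReal.ofReal ((4*M) * c⁻¹) := by
    calc (∫⁻ r in Set.Ioi c, ENNReal.ofReal (4 * min ((N*r)^p) M * r^(-2:ℝ)))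
        ≤ ∫⁻ r in Set.Ioi c, ENNReal.ofReal (4*M) * ENNReal.ofReal (r^(-2:ℝ)) := by
          apply setLIntegral_mono (by fun_prop)
          intro r hr
          have hr0 : (0:ℝ) < r := hcpos.trans hr
          rw [← ENNReal.ofReal_mul (mul_nonneg (by norm_num) hM.le)]
          apply ENNReal.ofReal_le_ofReal
          have hmin : min ((N*r)^p) M ≤ M := min_le_right _ _
          have hrneg : (0:ℝ) ≤ r^(-2:ℝ) := Real.rpow_nonneg hr0.le _
          apply mul_le_mul_of_nonneg_right _ hrneg
          linarith
      _ = ENNReal.ofReal (4*M) * ∫⁻ r in Set.Ioi c, ENNReal.ofReal (r^(-2:ℝ)) :=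
          lintegral_const_mul' _ _ ENNReal.ofReal_ne_top
      _ = ENNReal.ofReal (4*M) * ENNReal.ofReal c⁻¹ := by rw [lint_Ioi_inv_sq hcpos]
      _ = ENNReal.ofReal ((4*M) * c⁻¹) := (ENNReal.ofReal_mul (mul_nonneg (by norm_num) hM.le)).symm
  have htotal : Ih α₁ α₂ Λ N n₁ n₂ (θ₁, θ₂) ≤
      ENNReal.ofReal ((4 * N^p) * (c^(p-1)/(p-1)) + (4*M) * c⁻¹) := by
    rw [ENNReal.ofReal_add
      (mul_nonneg (mul_nonneg (by norm_num) (Real.rpow_nonneg hN.le _))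
        (div_nonneg (Real.rpow_nonneg hcpos.le _) hpm1.le))
      (mul_nonneg (mul_nonneg (by norm_num) hM.le) (inv_nonneg.mpr hcpos.le))]
    exact houter.trans (hsplit.trans (add_le_add hpiece1 hpiece2))
  apply htotal.trans
  apply ENNReal.ofReal_le_ofReal
  -- real arithmetic
  have hMe : 0 < M^e := Real.rpow_pos_of_pos hM _
  have hNpow : (0:ℝ) < N^(p-1) := Real.rpow_pos_of_pos hN _
  have hNp1 : N^p / N^(p-1) = N := by
    rw [← Real.rpow_sub hN, show p - (p-1) = 1 by ring, Real.rpow_one]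
  have hNp2 : N^p = N * N^(p-1) := by
    rw [show p = 1 + (p-1) by ring, Real.rpow_add hN, Real.rpow_one]
    ring_nf
  have hcp : c^(p-1) = M^e / N^(p-1) := by
    rw [hc_def, Real.div_rpow (Real.rpow_nonneg hM.le _) hN.le,
      ← Real.rpow_mul hM.le, show 1/p*(p-1) = e by rw [he_def]; field_simp]
  have hterm1 : 4*N^p * (c^(p-1)/(p-1)) = (4/(p-1)) * (N * M^e) := by
    rw [hcp, hNp2]; field_simp
  have hcinv : c⁻¹ = N / M^(1/p) := by rw [hc_def, inv_div]
  have hMp : 0 < M^(1/p) := Real.rpow_pos_of_pos hM _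
  have hMM : M / M^(1/p) = M^e := by
    rw [he_def, Real.rpow_sub hM, Real.rpow_one]
  have hterm2 : 4*M * c⁻¹ = 4 * (N * M^e) := by
    rw [hcinv, ← hMM]; ring
  have habs : a₁ * a₂ = |θ₁*θ₂| / ((n₁:ℝ)*(n₂:ℝ)) := by
    rw [ha₁_def, ha₂_def, abs_mul, div_mul_div_comm]
  have hT : (0:ℝ) < |θ₁*θ₂| := by rw [abs_mul]; exact mul_pos hθ₁ hθ₂
  have hn12 : (0:ℝ) < (n₁:ℝ)*(n₂:ℝ) := mul_pos hn₁R hn₂R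
  have h1 : M^e = (16*Real.pi^2)^e / (a₁*a₂)^e := by
    rw [hM_def, Real.div_rpow (by positivity) (mul_pos ha₁ ha₂).le]
  have h2 : (a₁*a₂)^e = |θ₁*θ₂|^e / ((n₁:ℝ)*(n₂:ℝ))^e := by
    rw [habs, Real.div_rpow (abs_nonneg _) hn12.le]
  have h3 : |θ₁*θ₂|^(1/p - 1) = (|θ₁*θ₂|^e)⁻¹ := by
    rw [show (1/p - 1 : ℝ) = -e by rw [he_def]; ring, Real.rpow_neg (abs_nonneg _)]
  have hMe_eq : M^e = (16*Real.pi^2)^e * (((n₁:ℝ)*(n₂:ℝ))^e * |θ₁*θ₂|^(1/p-1)) := by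
    rw [h1, h2, h3]
    field_simp [ne_of_gt (Real.rpow_pos_of_pos hT e), ne_of_gt (Real.rpow_pos_of_pos hn12 e)]
  have hn₁_eq : (n₁:ℝ) = N^(1/α₁) := by
    rw [hN_def, ← Real.rpow_mul hn₁R.le, mul_one_div_cancel hα₁0.ne', Real.rpow_one]
  have hn₂_ge : (N / c₂)^(1/α₂) ≤ (n₂:ℝ) := by
    have hb : N / c₂ ≤ (n₂:ℝ)^α₂ := by rw [div_le_iff₀ hc₂]; linarith
    calc (N/c₂)^(1/α₂) ≤ ((n₂:ℝ)^α₂)^(1/α₂) :=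
          Real.rpow_le_rpow (div_pos hN hc₂).le hb (by positivity)
    _ = (n₂:ℝ) := by
          rw [← Real.rpow_mul hn₂R.le, mul_one_div_cancel hα₂0.ne', Real.rpow_one]
  have hNp_le : N^p ≤ c₂^(1/α₂) * ((n₁:ℝ)*(n₂:ℝ)) := by
    have hsplitN : N^p = N^(1/α₁) * N^(1/α₂) := by rw [hp_def, Real.rpow_add hN]
    have hdiv : (N/c₂)^(1/α₂) = N^(1/α₂) / c₂^(1/α₂) := Real.div_rpow hN.le hc₂.le _
    have h5 : N^(1/α₂) / c₂^(1/α₂) ≤ (n₂:ℝ) := hdiv ▸ hn₂_ge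
    have h6 : N^(1/α₂) ≤ c₂^(1/α₂) * (n₂:ℝ) := by
      rw [div_le_iff₀ (Real.rpow_pos_of_pos hc₂ _)] at h5; linarith
    calc N^p = N^(1/α₁) * N^(1/α₂) := hsplitN
    _ ≤ N^(1/α₁) * (c₂^(1/α₂) * (n₂:ℝ)) :=
        mul_le_mul_of_nonneg_left h6 (Real.rpow_nonneg hN.le _)
    _ = c₂^(1/α₂) * ((n₁:ℝ)*(n₂:ℝ)) := by rw [← hn₁_eq]; ring
  have hN_le : N ≤ c₂^(1/(p*α₂)) * ((n₁:ℝ)*(n₂:ℝ))^(1/p) := by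
    have hNid : N = (N^p)^(1/p) := by
      rw [← Real.rpow_mul hN.le, mul_one_div_cancel hp0.ne', Real.rpow_one]
    calc N = (N^p)^(1/p) := hNid
    _ ≤ (c₂^(1/α₂) * ((n₁:ℝ)*(n₂:ℝ)))^(1/p) :=
        Real.rpow_le_rpow (Real.rpow_nonneg hN.le _) hNp_le (by positivity)
    _ = c₂^(1/(p*α₂)) * ((n₁:ℝ)*(n₂:ℝ))^(1/p) := by
        rw [Real.mul_rpow (Real.rpow_nonneg hc₂.le _) hn12.le,
          ← Real.rpow_mul hc₂.le, show 1/α₂ * (1/p) = 1/(p*α₂) by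
            rw [div_mul_div_comm, one_mul, mul_comm]]
  have hfinal1 : N * ((n₁:ℝ)*(n₂:ℝ))^e ≤ c₂^(1/(p*α₂)) * ((n₁:ℝ)*(n₂:ℝ)) := by
    calc N * ((n₁:ℝ)*(n₂:ℝ))^e
        ≤ (c₂^(1/(p*α₂)) * ((n₁:ℝ)*(n₂:ℝ))^(1/p)) * ((n₁:ℝ)*(n₂:ℝ))^e :=
          mul_le_mul_of_nonneg_right hN_le (Real.rpow_nonneg hn12.le _)
    _ = c₂^(1/(p*α₂)) * (((n₁:ℝ)*(n₂:ℝ))^(1/p) * ((n₁:ℝ)*(n₂:ℝ))^e) := by ring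
    _ = c₂^(1/(p*α₂)) * ((n₁:ℝ)*(n₂:ℝ)) := by
          rw [← Real.rpow_add hn12, show 1/p + e = 1 by rw [he_def]; ring, Real.rpow_one]
  have hC1 : (0:ℝ) < 4/(p-1) + 4 := add_pos (div_pos four_pos hpm1) four_pos
  have hC2 : (0:ℝ) < (16*Real.pi^2)^e := Real.rpow_pos_of_pos (by positivity) _
  have hC3 : (0:ℝ) < c₂^(1/(p*α₂)) := Real.rpow_pos_of_pos hc₂ _
  have hTf : (0:ℝ) ≤ |θ₁*θ₂|^(1/p-1) := Real.rpow_nonneg (abs_nonneg _) _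
  have hstep : N * (((n₁:ℝ)*(n₂:ℝ))^e * |θ₁*θ₂|^(1/p-1)) ≤
      c₂^(1/(p*α₂)) * (((n₁:ℝ)*(n₂:ℝ)) * |θ₁*θ₂|^(1/p-1)) := by
    calc N * (((n₁:ℝ)*(n₂:ℝ))^e * |θ₁*θ₂|^(1/p-1))
        = (N * ((n₁:ℝ)*(n₂:ℝ))^e) * |θ₁*θ₂|^(1/p-1) := by ring
    _ ≤ (c₂^(1/(p*α₂)) * ((n₁:ℝ)*(n₂:ℝ))) * |θ₁*θ₂|^(1/p-1) :=
        mul_le_mul_of_nonneg_right hfinal1 hTf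
    _ = c₂^(1/(p*α₂)) * (((n₁:ℝ)*(n₂:ℝ)) * |θ₁*θ₂|^(1/p-1)) := by ring
  have hT2 : (0:ℝ) ≤ (n₁:ℝ) * |θ₁|^(α₁-1) :=
    mul_nonneg hn₁R.le (Real.rpow_nonneg (abs_nonneg _) _)
  have hT3 : (0:ℝ) ≤ (n₂:ℝ) * |θ₂|^(α₂-1) :=
    mul_nonneg hn₂R.le (Real.rpow_nonneg (abs_nonneg _) _)
  calc 4 * N^p * (c^(p-1)/(p-1)) + 4*M * c⁻¹
      = (4/(p-1) + 4) * ((16*Real.pi^2)^e *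
          (N * (((n₁:ℝ)*(n₂:ℝ))^e * |θ₁*θ₂|^(1/p-1)))) := by
        rw [hterm1, hterm2, hMe_eq]; ring
  _ ≤ (4/(p-1) + 4) * ((16*Real.pi^2)^e *
          (c₂^(1/(p*α₂)) * (((n₁:ℝ)*(n₂:ℝ)) * |θ₁*θ₂|^(1/p-1)))) := by
        apply mul_le_mul_of_nonneg_left _ hC1.le
        exact mul_le_mul_of_nonneg_left hstep hC2.le
  _ = ((4/(p-1) + 4) * (16*Real.pi^2)^e * c₂^(1/(p*α₂))) *
        ((n₁:ℝ)*(n₂:ℝ) * |θ₁*θ₂|^(1/p-1)) := by ring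
  _ ≤ ((4/(p-1) + 4) * (16*Real.pi^2)^e * c₂^(1/(p*α₂))) *
        ((n₁:ℝ)*(n₂:ℝ) * |θ₁*θ₂|^(1/p-1) + (n₁:ℝ)*|θ₁|^(α₁-1)
          + (n₂:ℝ)*|θ₂|^(α₂-1) + N) := by
        apply mul_le_mul_of_nonneg_left _ (by positivity)
        linarith [hN.le]
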